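/- Let Ω be a finite nonempty set with distinguished element 0 ∈ Ω, w : Ω → ℝ a nonnegative spatial kernel with w(0) > 0 and Σ_{j∈Ω} w(j) = 1, T > 0, and g : Ω → ℝ with |g(j)| ≤ T and |g(j) − g(0)| ≤ T for all j ∈ Ω. Let φ : ℝ → ℝ be nonnegative with φ(0) = 1, let ψ : ℝ → ℝ satisfy |φ(t) − ψ(t)| ≤ ε for all t ∈ [−T, T], where 0 ≤ ε < w(0). Define P₁ = Σ_{j∈Ω} w(j) φ(g(j) − g(0)) g(j), Q₁ = Σ_{j∈Ω} w(j) φ(g(j) − g(0)), and P₂, Q₂ analogously with ψ in place of φ. Then |P₁/Q₁ − P₂/Q₂| ≤ 2Tε/(w(0) − ε). -/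

import Mathlib

/-!
Both filter outputs are weighted means of `g`. The exact normaliser `Q₁` is at least `w 0`,
since the centre pixel carries weight `w 0 * φ 0 = w 0`, and replacing `φ` by `ψ` moves each
of `Q₁` and `P₁` by at most `ε`, resp. `T ε`, because the spatial weights sum to `1`. Hence
`Q₂ ≥ w 0 - ε > 0`, and writing `P₁/Q₁ - P₂/Q₂ = ((P₁/Q₁)(Q₂ - Q₁) + (P₁ - P₂)) / Q₂` with
`|P₁/Q₁| ≤ T` bounds the difference by `2 T ε / (w 0 - ε)`.
-/

open Finset

lemma abs_sum_mul_le {ι : Type*} (s : Finset ι) {w f : ι → ℝ} {C : ℝ}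
    (hw : ∀ j, 0 ≤ w j) (hf : ∀ j, |f j| ≤ C) :
    |∑ j ∈ s, w j * f j| ≤ C * ∑ j ∈ s, w j :=
  calc |∑ j ∈ s, w j * f j| ≤ ∑ j ∈ s, |w j * f j| := abs_sum_le_sum_abs _ _
    _ ≤ ∑ j ∈ s, w j * C := by
        gcongr with j
        rw [abs_mul, abs_of_nonneg (hw j)]
        exact mul_le_mul_of_nonneg_left (hf j) (hw j)
    _ = C * ∑ j ∈ s, w j := by rw [← sum_mul, mul_comm]

lemma abs_sum_mul_div_sum_le {ι : Type*} (s : Finset ι) {w f : ι → ℝ} {C : ℝ}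
    (hw : ∀ j, 0 ≤ w j) (hf : ∀ j, |f j| ≤ C) (hs : 0 < ∑ j ∈ s, w j) :
    |(∑ j ∈ s, w j * f j) / ∑ j ∈ s, w j| ≤ C := by
  rw [abs_div, abs_of_pos hs, div_le_iff₀ hs]
  exact abs_sum_mul_le s hw hf

lemma abs_div_sub_div_le {P₁ Q₁ P₂ Q₂ T ε m : ℝ} (hQ₁ : Q₁ ≠ 0) (hm : 0 < m) (hmQ₂ : m ≤ Q₂)
    (hP₁ : |P₁ / Q₁| ≤ T) (hQ : |Q₁ - Q₂| ≤ ε) (hP : |P₁ - P₂| ≤ T * ε) :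
    |P₁ / Q₁ - P₂ / Q₂| ≤ 2 * T * ε / m := by
  have hQ₂ : 0 < Q₂ := hm.trans_le hmQ₂
  have hT : 0 ≤ T := (abs_nonneg _).trans hP₁
  have hε : 0 ≤ ε := (abs_nonneg _).trans hQ
  have hsplit : P₁ / Q₁ - P₂ / Q₂ = (P₁ / Q₁ * (Q₂ - Q₁) + (P₁ - P₂)) / Q₂ := by
    field_simp
    ring
  have hnum : |P₁ / Q₁ * (Q₂ - Q₁) + (P₁ - P₂)| ≤ 2 * T * ε :=
    calc |P₁ / Q₁ * (Q₂ - Q₁) + (P₁ - P₂)| ≤ |P₁ / Q₁| * |Q₂ - Q₁| + |P₁ - P₂| := by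
          rw [← abs_mul]; exact abs_add_le _ _
      _ ≤ T * ε + T * ε := by rw [abs_sub_comm] at hQ; gcongr
      _ = 2 * T * ε := by ring
  rw [hsplit, abs_div, abs_of_pos hQ₂]
  calc |P₁ / Q₁ * (Q₂ - Q₁) + (P₁ - P₂)| / Q₂ ≤ 2 * T * ε / Q₂ := by gcongr
    _ ≤ 2 * T * ε / m := by gcongr

theorem bilateral_filter_accuracy_general
    {Ω : Type*} [Fintype Ω] (z : Ω) (w : Ω → ℝ)
    (hw : ∀ j, 0 ≤ w j) (hwz : 0 < w z) (hw1 : ∑ j, w j = 1)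
    (T : ℝ) (g : Ω → ℝ)
    (hg : ∀ j, |g j| ≤ T) (hgz : ∀ j, |g j - g z| ≤ T)
    (φ ψ : ℝ → ℝ) (hφ : ∀ t, 0 ≤ φ t) (hφ0 : φ 0 = 1)
    (ε : ℝ) (hεw : ε < w z)
    (happ : ∀ t ∈ Set.Icc (-T) T, |φ t - ψ t| ≤ ε) :
    |(∑ j, w j * φ (g j - g z) * g j) / (∑ j, w j * φ (g j - g z)) -
      (∑ j, w j * ψ (g j - g z) * g j) / (∑ j, w j * ψ (g j - g z))| ≤
      2 * T * ε / (w z - ε) := by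
  have hdiff (j : Ω) : |φ (g j - g z) - ψ (g j - g z)| ≤ ε :=
    happ _ (Set.mem_Icc.mpr (abs_le.mp (hgz j)))
  have hφw (j : Ω) : 0 ≤ w j * φ (g j - g z) := mul_nonneg (hw j) (hφ _)
  have hQ₁ : w z ≤ ∑ j, w j * φ (g j - g z) := by
    simpa [hφ0] using single_le_sum (fun j _ => hφw j) (mem_univ z)
  have hQ : |∑ j, w j * φ (g j - g z) - ∑ j, w j * ψ (g j - g z)| ≤ ε := by
    simpa [← sum_sub_distrib, ← mul_sub, hw1] using abs_sum_mul_le univ hw hdiff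
  have hP : |∑ j, w j * φ (g j - g z) * g j - ∑ j, w j * ψ (g j - g z) * g j| ≤ T * ε := by
    have hdiffg (j : Ω) : |(φ (g j - g z) - ψ (g j - g z)) * g j| ≤ ε * T := by
      rw [abs_mul]
      exact mul_le_mul (hdiff j) (hg j) (abs_nonneg _) ((abs_nonneg _).trans (hdiff j))
    have := abs_sum_mul_le univ hw hdiffg
    rw [hw1, mul_one, mul_comm] at this
    simpa [← sum_sub_distrib, mul_assoc, ← mul_sub, ← sub_mul] using this
  refine abs_div_sub_div_le (hwz.trans_le hQ₁).ne' (by linarith) ?_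
    (abs_sum_mul_div_sum_le univ hφw hg (hwz.trans_le hQ₁)) hQ hP
  linarith [(abs_le.mp hQ).2]

/-- **Per-pixel filtering accuracy of the shiftable bilateral filter.**
If the spatial kernel `w` is nonnegative with `w 0 > 0` and unit total mass,
the image values `g` and the local intensity differences are bounded by `T`,
the range kernel `φ` is nonnegative with `φ 0 = 1`, and `ψ` approximates `φ`
uniformly within `ε < w 0` on `[−T, T]`, then the exact and approximate
bilateral filter outputs differ by at most `2Tε / (w 0 − ε)`. -/
theorem bilateral_filter_accuracy
    {Ω : Type*} [Fintype Ω] (z : Ω) (w : Ω → ℝ)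
    (hw : ∀ j, 0 ≤ w j) (hwz : 0 < w z) (hw1 : ∑ j, w j = 1)
    (T : ℝ) (hT : 0 < T) (g : Ω → ℝ)
    (hg : ∀ j, |g j| ≤ T) (hgz : ∀ j, |g j - g z| ≤ T)
    (φ ψ : ℝ → ℝ) (hφ : ∀ t, 0 ≤ φ t) (hφ0 : φ 0 = 1)
    (ε : ℝ) (hε : 0 ≤ ε) (hεw : ε < w z)
    (happ : ∀ t ∈ Set.Icc (-T) T, |φ t - ψ t| ≤ ε) :
    |(∑ j, w j * φ (g j - g z) * g j) / (∑ j, w j * φ (g j - g z)) -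
      (∑ j, w j * ψ (g j - g z) * g j) / (∑ j, w j * ψ (g j - g z))| ≤
      2 * T * ε / (w z - ε) :=
  bilateral_filter_accuracy_general z w hw hwz hw1 T g hg hgz φ ψ hφ hφ0 ε hεw happ
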